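/- arXiv:2103.05962 — 3 statements merged into one kernel-verified Lean document; each statement's English description precedes it below -/
import Mathlib

section
/- Let N be a positive integer and let X, Y be Hermitian N×N complex matrices. For t ∈ ℝ, let F_X(t) = (1/N)·#{eigenvalues λ of X (with multiplicity) with λ ≤ t} denote the empirical cumulative distribution function. Then sup_{t ∈ ℝ} |F_X(t) − F_{X+Y}(t)| ≤ rank(Y)/N. -/
open Matrix Finset

/-- Empirical cumulative distribution function of a Hermitian matrix. -/
noncomputable def ecdf {N : ℕ} {X : Matrix (Fin N) (Fin N) ℂ}
    (hX : X.IsHermitian) (t : ℝ) : ℝ :=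
  (Finset.univ.filter (fun i => hX.eigenvalues i ≤ t)).card / N

/-!
Let `S` and `T` be self-adjoint with eigenvalues `μ` and `ν`. If more than
`#{ν ≤ t} + rank (T - S)` of the `μ` were `≤ t`, the span of the corresponding eigenvectors of `S`,
the span of the eigenvectors of `T` with eigenvalue `> t`, and `ker (T - S)` would have dimensions
adding up to more than `2 dim E`, so they would share a nonzero vector `v`. But `⟪v, S v⟫ ≤ t ‖v‖²`
by the first, `t ‖v‖² < ⟪v, T v⟫` by the second, and `S v = T v` by the third.
Applied to `X` and `X + Y` in both orders, this bounds the difference of the eigenvalue counts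
by `rank Y`.
-/

open Module Submodule RCLike
open scoped InnerProductSpace

theorem Submodule.finrank_add_finrank_le_finrank_add_finrank_inf {K V : Type*} [DivisionRing K]
    [AddCommGroup V] [Module K V] [FiniteDimensional K V] (s t : Submodule K V) :
    finrank K s + finrank K t ≤ finrank K V + finrank K ↥(s ⊓ t) := by
  rw [← finrank_sup_add_finrank_inf_eq]
  gcongr
  exact finrank_le _

namespace OrthonormalBasis

variable {𝕜 E ι : Type*} [RCLike 𝕜] [NormedAddCommGroup E] [InnerProductSpace 𝕜 E] [Fintype ι]
  (b : OrthonormalBasis ι 𝕜 E)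

theorem inner_eq_zero_of_mem_span_image {s : Set ι} {v : E} (hv : v ∈ span 𝕜 (b '' s)) {i : ι}
    (hi : i ∉ s) : ⟪b i, v⟫_𝕜 = 0 := by
  refine mem_orthogonal_singleton_iff_inner_right.mp (span_le.mpr ?_ hv)
  rintro _ ⟨j, hj, rfl⟩
  exact mem_orthogonal_singleton_iff_inner_right.mpr
    (b.inner_eq_zero (ne_of_mem_of_not_mem hj hi).symm)

theorem finrank_span_image (s : Finset ι) : finrank 𝕜 (span 𝕜 (b '' s)) = #s := by
  rw [Set.image_eq_range, ← Fintype.card_coe s]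
  exact finrank_span_eq_card (b.orthonormal.linearIndependent.comp _ Subtype.val_injective)

end OrthonormalBasis

namespace LinearMap.IsSymmetric

variable {𝕜 E ι κ : Type*} [RCLike 𝕜] [NormedAddCommGroup E] [InnerProductSpace 𝕜 E]
  [Fintype ι] [Fintype κ] {S T : E →ₗ[𝕜] E} {b : OrthonormalBasis ι 𝕜 E}
  {c : OrthonormalBasis κ 𝕜 E} {μ : ι → ℝ} {ν : κ → ℝ}

theorem re_inner_map_self_sub_eq_sum (hT : T.IsSymmetric) (hb : ∀ i, T (b i) = (μ i : 𝕜) • b i)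
    (t : ℝ) (v : E) :
    re ⟪v, T v⟫_𝕜 - t * ‖v‖ ^ 2 = ∑ i, (μ i - t) * ‖⟪b i, v⟫_𝕜‖ ^ 2 := by
  have hcoord (i : ι) : ⟪v, b i⟫_𝕜 * ⟪b i, T v⟫_𝕜 = ((μ i * ‖⟪b i, v⟫_𝕜‖ ^ 2 : ℝ) : 𝕜) := by
    rw [← hT, hb, inner_smul_left, conj_ofReal, ← inner_conj_symm, mul_left_comm, RCLike.conj_mul]
    push_cast; ring
  rw [← b.sum_inner_mul_inner, ← b.sum_sq_norm_inner_right v]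
  simp only [hcoord, ← ofReal_sum, ofReal_re, mul_sum, ← sum_sub_distrib, sub_mul]

theorem re_inner_map_self_le (hT : T.IsSymmetric) (hb : ∀ i, T (b i) = (μ i : 𝕜) • b i) {t : ℝ}
    {v : E} (hv : v ∈ span 𝕜 (b '' {i | μ i ≤ t})) : re ⟪v, T v⟫_𝕜 ≤ t * ‖v‖ ^ 2 := by
  rw [← sub_nonpos, re_inner_map_self_sub_eq_sum hT hb]
  refine sum_nonpos fun i _ => ?_
  by_cases hi : μ i ≤ t
  · exact mul_nonpos_of_nonpos_of_nonneg (sub_nonpos.mpr hi) (by positivity)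
  · simp [b.inner_eq_zero_of_mem_span_image hv hi]

theorem lt_re_inner_map_self (hT : T.IsSymmetric) (hb : ∀ i, T (b i) = (μ i : 𝕜) • b i) {t : ℝ}
    {v : E} (hv : v ∈ span 𝕜 (b '' {i | t < μ i})) (hv₀ : v ≠ 0) : t * ‖v‖ ^ 2 < re ⟪v, T v⟫_𝕜 := by
  have hμ {i : ι} (hi : ⟪b i, v⟫_𝕜 ≠ 0) : t < μ i := by
    by_contra h
    exact hi (b.inner_eq_zero_of_mem_span_image hv h)
  obtain ⟨i, hi⟩ : ∃ i, ⟪b i, v⟫_𝕜 ≠ 0 := by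
    by_contra! h
    exact hv₀ (by simpa [h] using (b.sum_repr' v).symm)
  rw [← sub_pos, re_inner_map_self_sub_eq_sum hT hb]
  refine sum_pos' (fun i _ => ?_) ⟨i, mem_univ _, ?_⟩
  · by_cases hi : ⟪b i, v⟫_𝕜 = 0
    · simp [hi]
    · exact mul_nonneg (sub_nonneg.mpr (hμ hi).le) (by positivity)
  · exact mul_pos (sub_pos.mpr (hμ hi)) (by positivity)

theorem card_le_card_add_finrank_range_sub (hS : S.IsSymmetric)
    (hT : T.IsSymmetric) (hb : ∀ i, S (b i) = (μ i : 𝕜) • b i)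
    (hc : ∀ j, T (c j) = (ν j : 𝕜) • c j) (t : ℝ) :
    #{i | μ i ≤ t} ≤ #{j | ν j ≤ t} + finrank 𝕜 (LinearMap.range (T - S)) := by
  set V := span 𝕜 (b '' ↑({i | μ i ≤ t} : Finset ι))
  set U := span 𝕜 (c '' ↑({j | t < ν j} : Finset κ))
  have hVUK : V ⊓ U ⊓ LinearMap.ker (T - S) = ⊥ := by
    refine (Submodule.eq_bot_iff _).mpr fun v ⟨⟨hvV, hvU⟩, hvK⟩ => by_contra fun hv₀ => ?_
    have hTS : T v = S v := sub_eq_zero.mp hvK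
    have hle := hS.re_inner_map_self_le hb (by simpa [V] using hvV)
    have hlt := hT.lt_re_inner_map_self hc (by simpa [U] using hvU) hv₀
    rw [hTS] at hlt
    exact hlt.not_ge hle
  have : FiniteDimensional 𝕜 E := c.toBasis.finiteDimensional_of_finite
  have hdim : finrank 𝕜 E = Fintype.card κ := finrank_eq_card_basis c.toBasis
  have hV : finrank 𝕜 V = #{i | μ i ≤ t} := b.finrank_span_image _
  have hU : finrank 𝕜 U = #{j | t < ν j} := c.finrank_span_image _
  have hsplit : #{j | ν j ≤ t} + #{j | t < ν j} = Fintype.card κ := by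
    simpa using card_filter_add_card_filter_not (s := univ) (fun j => ν j ≤ t)
  have h₁ := finrank_add_finrank_le_finrank_add_finrank_inf V U
  have h₂ := finrank_add_finrank_le_finrank_add_finrank_inf (V ⊓ U) (LinearMap.ker (T - S))
  have hrank := LinearMap.finrank_range_add_finrank_ker (T - S)
  rw [hVUK, finrank_bot] at h₂
  omega

end LinearMap.IsSymmetric

namespace Matrix

theorem rank_neg {n R : Type*} [Fintype n] [CommRing R] (A : Matrix n n R) :
    (-A).rank = A.rank := by
  have hneg : (-A).mulVecLin = -A.mulVecLin := LinearMap.ext fun x => neg_mulVec x A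
  rw [rank, rank, hneg, LinearMap.range_neg]

variable {𝕜 n : Type*} [RCLike 𝕜] [Fintype n] [DecidableEq n]

theorem rank_eq_finrank_range_toEuclideanLin {m : Type*} [Fintype m] (A : Matrix m n 𝕜) :
    A.rank = finrank 𝕜 (LinearMap.range (toEuclideanLin A)) := by
  rw [toEuclideanLin_eq_toLin_orthonormal]
  exact A.rank_eq_finrank_range_toLin _ _

theorem IsHermitian.toEuclideanLin_eigenvectorBasis {A : Matrix n n 𝕜} (hA : A.IsHermitian)
    (j : n) :
    toEuclideanLin A (hA.eigenvectorBasis j) = (hA.eigenvalues j : 𝕜) • hA.eigenvectorBasis j := by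
  ext i
  simpa only [toLpLin_apply, WithLp.ofLp_smul, RCLike.real_smul_eq_coe_smul (K := 𝕜)] using
    congrFun (hA.mulVec_eigenvectorBasis j) i

theorem IsHermitian.card_eigenvalues_le_le_card_add_rank_sub {A C : Matrix n n 𝕜}
    (hA : A.IsHermitian) (hC : C.IsHermitian) (t : ℝ) :
    #{i | hA.eigenvalues i ≤ t} ≤ #{i | hC.eigenvalues i ≤ t} + (C - A).rank := by
  rw [rank_eq_finrank_range_toEuclideanLin, map_sub]
  exact (isSymmetric_toEuclideanLin_iff.mpr hA).card_le_card_add_finrank_range_sub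
    (isSymmetric_toEuclideanLin_iff.mpr hC) hA.toEuclideanLin_eigenvectorBasis
    hC.toEuclideanLin_eigenvectorBasis t

end Matrix

theorem rank_inequality_cdf_general (N : ℕ)
    (X Y : Matrix (Fin N) (Fin N) ℂ) (hX : X.IsHermitian)
    (hXY : (X + Y).IsHermitian) :
    ∀ t : ℝ, |ecdf hX t - ecdf hXY t| ≤ (Y.rank : ℝ) / N := by
  intro t
  have h₁ := hX.card_eigenvalues_le_le_card_add_rank_sub hXY t
  have h₂ := hXY.card_eigenvalues_le_le_card_add_rank_sub hX t
  rw [add_sub_cancel_left] at h₁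
  rw [sub_add_cancel_left, rank_neg] at h₂
  rw [ecdf, ecdf, div_sub_div_same, abs_div, Nat.abs_cast]
  gcongr
  rw [abs_sub_le_iff, sub_le_iff_le_add', sub_le_iff_le_add']
  exact ⟨mod_cast h₁, mod_cast h₂⟩

theorem rank_inequality_cdf (N : ℕ) (hN : 0 < N)
    (X Y : Matrix (Fin N) (Fin N) ℂ) (hX : X.IsHermitian) (hY : Y.IsHermitian)
    (hXY : (X + Y).IsHermitian) :
    ∀ t : ℝ, |ecdf hX t - ecdf hXY t| ≤ (Y.rank : ℝ) / N :=
  rank_inequality_cdf_general N X Y hX hXY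
end

section
/- Let A be a unital ring. Suppose R₁ = u₁ A₁⁻¹ v₁ and R₂ = u₂ A₂⁻¹ v₂ where A₁ ∈ M_{k₁}(A) and A₂ ∈ M_{k₂}(A) are invertible, u₁ ∈ M_{p×k₁}(A), v₁ ∈ M_{k₁×q}(A), u₂ ∈ M_{q×k₂}(A), v₂ ∈ M_{k₂×r}(A). Then the block matrix B = [[A₁, −v₁u₂],[0, A₂]] ∈ M_{k₁+k₂}(A) is invertible and R₁ · R₂ = [u₁ 0] · B⁻¹ · [0 ; v₂]. -/
/-!
The upper block-triangular matrix `[[A₁, -v₁u₂], [0, A₂]]` has inverse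
`[[A₁⁻¹, A₁⁻¹ v₁ u₂ A₂⁻¹], [0, A₂⁻¹]]` over any ring, and `[u₁ 0] · _ · [0; v₂]` extracts
exactly `u₁` times the upper-right block times `v₂`.
-/

open Matrix

namespace Matrix

variable {l m n o R : Type*} [Ring R] [Fintype m] [Fintype n]

-- `Matrix.fromBlocksZero₂₁Invertible` needs a commutative ring; these hold over any ring.
section Triangular

variable [DecidableEq m] [DecidableEq n]
  (A : Matrix m m R) (B : Matrix m n R) (D : Matrix n n R) [Invertible A] [Invertible D]

theorem fromBlocks_zero₂₁_mul_fromBlocks_invOf :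
    fromBlocks A B 0 D * fromBlocks (⅟A) (-(⅟A * B * ⅟D)) 0 (⅟D) = 1 := by
  simp only [fromBlocks_multiply, Matrix.mul_zero, Matrix.zero_mul, add_zero, zero_add,
    neg_zero, Matrix.mul_neg, ← Matrix.mul_assoc, mul_invOf_self, Matrix.one_mul,
    neg_add_cancel, fromBlocks_one]

theorem fromBlocks_invOf_mul_fromBlocks_zero₂₁ :
    fromBlocks (⅟A) (-(⅟A * B * ⅟D)) 0 (⅟D) * fromBlocks A B 0 D = 1 := by
  simp only [fromBlocks_multiply, Matrix.mul_zero, Matrix.zero_mul, add_zero, zero_add,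
    Matrix.neg_mul, Matrix.mul_assoc, invOf_mul_self, Matrix.mul_one, add_neg_cancel,
    fromBlocks_one]

end Triangular

theorem fromCols_zero_mul_fromBlocks_mul_fromRows_zero (u : Matrix l m R)
    (P : Matrix m m R) (Q : Matrix m n R) (T : Matrix n m R) (S : Matrix n n R)
    (v : Matrix n o R) :
    fromCols u (0 : Matrix l n R) * fromBlocks P Q T S * fromRows (0 : Matrix m o R) v =
      u * Q * v := by
  simp only [fromCols_mul_fromBlocks, fromCols_mul_fromRows, Matrix.zero_mul, Matrix.mul_zero,
    add_zero, zero_add]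

end Matrix

theorem product_linearization (R : Type*) [Ring R] (p q r k₁ k₂ : ℕ)
    (A₁ : Matrix (Fin k₁) (Fin k₁) R) [Invertible A₁]
    (A₂ : Matrix (Fin k₂) (Fin k₂) R) [Invertible A₂]
    (u₁ : Matrix (Fin p) (Fin k₁) R) (v₁ : Matrix (Fin k₁) (Fin q) R)
    (u₂ : Matrix (Fin q) (Fin k₂) R) (v₂ : Matrix (Fin k₂) (Fin r) R) :
    ∃ C : Matrix (Fin k₁ ⊕ Fin k₂) (Fin k₁ ⊕ Fin k₂) R,
      Matrix.fromBlocks A₁ (-(v₁ * u₂)) 0 A₂ * C = 1 ∧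
      C * Matrix.fromBlocks A₁ (-(v₁ * u₂)) 0 A₂ = 1 ∧
      (u₁ * ⅟A₁ * v₁) * (u₂ * ⅟A₂ * v₂) =
        Matrix.fromCols u₁ (0 : Matrix (Fin p) (Fin k₂) R) * C *
          Matrix.fromRows (0 : Matrix (Fin k₁) (Fin r) R) v₂ := by
  refine ⟨fromBlocks (⅟A₁) (-(⅟A₁ * -(v₁ * u₂) * ⅟A₂)) 0 (⅟A₂),
    fromBlocks_zero₂₁_mul_fromBlocks_invOf _ _ _,
    fromBlocks_invOf_mul_fromBlocks_zero₂₁ _ _ _, ?_⟩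
  rw [fromCols_zero_mul_fromBlocks_mul_fromRows_zero]
  simp only [Matrix.mul_neg, Matrix.neg_mul, neg_neg, Matrix.mul_assoc]
end

section
/- Let A be a unital complex *-algebra, let A ∈ M_k(A) be invertible, u ∈ M_{1×k}(A), v ∈ M_{k×1}(A), and set r = u A⁻¹ v ∈ A. Define the block matrix Q = [[0, A*],[A, 0]] ∈ M_{2k}(A) and w = [½ u* ; v] ∈ M_{2k×1}(A). Then Q is invertible, Q⁻¹ = [[0, A⁻¹],[(A*)⁻¹, 0]], and w* Q⁻¹ w = ½(r + r*). In particular, if r is self-adjoint then r = w* Q⁻¹ w. -/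
open Matrix

namespace Matrix

variable {n m R : Type*} [Fintype n]

theorem fromBlocks_antidiag_mul_fromBlocks_antidiag_eq_one [DecidableEq n] [Semiring R]
    {B B' C C' : Matrix n n R} (hB : B * B' = 1) (hC : C * C' = 1) :
    fromBlocks 0 B C 0 * fromBlocks 0 C' B' 0 = 1 := by
  simp [fromBlocks_multiply, hB, hC, ← fromBlocks_one]

theorem conjTranspose_fromRows_mul_fromBlocks_antidiag_mul_fromRows [Fintype m]
    [Semiring R] [StarRing R] (N : Matrix n n R) (x y : Matrix n m R) :
    (fromRows x y)ᴴ * fromBlocks 0 N Nᴴ 0 * fromRows x y =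
      xᴴ * N * y + (xᴴ * N * y)ᴴ := by
  rw [conjTranspose_fromRows_eq_fromCols_conjTranspose, fromCols_mul_fromBlocks,
    fromCols_mul_fromRows]
  simp only [Matrix.mul_zero, add_zero, conjTranspose_mul,
    conjTranspose_conjTranspose, Matrix.mul_assoc, add_comm]

end Matrix

theorem selfadjoint_linearization (A : Type*) [Ring A] [Algebra ℂ A]
    [StarRing A] [StarModule ℂ A] (k : ℕ)
    (M : Matrix (Fin k) (Fin k) A) [Invertible M]
    (u : Matrix (Fin 1) (Fin k) A) (v : Matrix (Fin k) (Fin 1) A) :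
    let r : Matrix (Fin 1) (Fin 1) A := u * ⅟M * v
    let Q : Matrix (Fin k ⊕ Fin k) (Fin k ⊕ Fin k) A := Matrix.fromBlocks 0 Mᴴ M 0
    let Qi : Matrix (Fin k ⊕ Fin k) (Fin k ⊕ Fin k) A := Matrix.fromBlocks 0 (⅟M) (⅟M)ᴴ 0
    let w : Matrix (Fin k ⊕ Fin k) (Fin 1) A :=
      Matrix.fromRows ((2 : ℂ)⁻¹ • uᴴ) v
    Q * Qi = 1 ∧ Qi * Q = 1 ∧
    wᴴ * Qi * w = (2 : ℂ)⁻¹ • (r + rᴴ) ∧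
    (rᴴ = r → r = wᴴ * Qi * w) := by
  intro r Q Qi w
  have hform : wᴴ * Qi * w = (2 : ℂ)⁻¹ • (r + rᴴ) := by
    have hstar : star (2 : ℂ)⁻¹ = (2 : ℂ)⁻¹ := by simp
    rw [conjTranspose_fromRows_mul_fromBlocks_antidiag_mul_fromRows, conjTranspose_smul,
      hstar, conjTranspose_conjTranspose, Matrix.smul_mul, Matrix.smul_mul,
      conjTranspose_smul, hstar, smul_add]
  refine ⟨fromBlocks_antidiag_mul_fromBlocks_antidiag_eq_one
      (by rw [conjTranspose_invOf, mul_invOf_self]) (mul_invOf_self M),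
    fromBlocks_antidiag_mul_fromBlocks_antidiag_eq_one
      (invOf_mul_self M) (by rw [conjTranspose_invOf, invOf_mul_self]),
    hform, fun hr => ?_⟩
  rw [hform, hr, ← two_smul ℂ r, smul_smul, inv_mul_cancel₀ two_ne_zero, one_smul]
end
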